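/- arXiv:1801.05764 — 7 statements merged into one kernel-verified Lean document; each statement's English description precedes it below -/
import Mathlib

section
/- The CertainLogic AND operator is commutative: for all real numbers t_A, c_A, f_A, t_B, c_B, f_B ∈ [0,1] with f_A·f_B ≠ 1, the opinion obtained by applying the AND operator to (t_A,c_A,f_A) and (t_B,c_B,f_B) equals, componentwise (trust value, certainty, and prior), the opinion obtained by applying it to (t_B,c_B,f_B) and (t_A,c_A,f_A). -/
/-- The certainty component of the CertainLogic `AND` operator. -/
noncomputable def ctAndC (tA cA fA tB cB fB : ℝ) : ℝ :=
  cA + cB - cA * cB -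
    ((1 - cA) * cB * (1 - fA) * tB + cA * (1 - cB) * (1 - fB) * tA) / (1 - fA * fB)

/-- The trust-value component of the CertainLogic `AND` operator. -/
noncomputable def ctAndT (tA cA fA tB cB fB : ℝ) : ℝ :=
  if ctAndC tA cA fA tB cB fB ≠ 0 then
    (1 / ctAndC tA cA fA tB cB fB) *
      (cA * cB * tA * tB +
        (cA * (1 - cB) * (1 - fA) * fB * tA + (1 - cA) * cB * fA * (1 - fB) * tB) /
          (1 - fA * fB))
  else 0.5

/-- The prior component of the CertainLogic `AND` operator. -/
noncomputable def ctAndF (_tA _cA fA _tB _cB fB : ℝ) : ℝ := fA * fB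

/-- The CertainLogic `AND` operator, as an opinion `(t, c, f)`. -/
noncomputable def ctAnd (tA cA fA tB cB fB : ℝ) : ℝ × ℝ × ℝ :=
  (ctAndT tA cA fA tB cB fB, ctAndC tA cA fA tB cB fB, ctAndF tA cA fA tB cB fB)

/-- The CertainLogic `AND` operator is commutative: swapping the two input opinions
leaves all three components (trust value, certainty, prior) unchanged. -/
theorem ctAnd_comm (tA cA fA tB cB fB : ℝ)
    (htA : tA ∈ Set.Icc (0 : ℝ) 1) (hcA : cA ∈ Set.Icc (0 : ℝ) 1)
    (hfA : fA ∈ Set.Icc (0 : ℝ) 1) (htB : tB ∈ Set.Icc (0 : ℝ) 1)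
    (hcB : cB ∈ Set.Icc (0 : ℝ) 1) (hfB : fB ∈ Set.Icc (0 : ℝ) 1)
    (hf : fA * fB ≠ 1) :
    ctAnd tA cA fA tB cB fB = ctAnd tB cB fB tA cA fA := by
  have hC : ctAndC tA cA fA tB cB fB = ctAndC tB cB fB tA cA fA := by
    unfold ctAndC; rw [mul_comm fB fA]; ring_nf
  have hT : ctAndT tA cA fA tB cB fB = ctAndT tB cB fB tA cA fA := by
    unfold ctAndT
    rw [hC, mul_comm fB fA]
    ring_nf
  simp [ctAnd, ctAndF, hC, hT, mul_comm fA fB]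
end

section
/- The CertainLogic AND operator generalizes standard probabilistic conjunction: for all real numbers t_A, f_A, t_B, f_B ∈ [0,1] with f_A·f_B ≠ 1, applying the AND operator to the fully certain opinions (t_A, 1, f_A) and (t_B, 1, f_B) yields exactly the opinion (t_A·t_B, 1, f_A·f_B). -/
/-- The CertainLogic `AND` operator generalizes standard probabilistic conjunction:
on fully certain opinions `(tA, 1, fA)` and `(tB, 1, fB)` it yields exactly
`(tA·tB, 1, fA·fB)`. -/
theorem ctAnd_fully_certain (tA fA tB fB : ℝ)
    (htA : tA ∈ Set.Icc (0 : ℝ) 1) (hfA : fA ∈ Set.Icc (0 : ℝ) 1)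
    (htB : tB ∈ Set.Icc (0 : ℝ) 1) (hfB : fB ∈ Set.Icc (0 : ℝ) 1)
    (hf : fA * fB ≠ 1) :
    ctAnd tA 1 fA tB 1 fB = (tA * tB, 1, fA * fB) := by
  have hc : ctAndC tA 1 fA tB 1 fB = 1 := by simp [ctAndC]
  simp [ctAnd, ctAndT, ctAndF, hc]
end

section
/- The CertainLogic OR operator generalizes standard probabilistic disjunction: for all real numbers t_A, f_A, t_B, f_B ∈ [0,1] with f_A + f_B − f_A·f_B ≠ 0, applying the OR operator to the fully certain opinions (t_A, 1, f_A) and (t_B, 1, f_B) yields exactly the opinion (t_A + t_B − t_A·t_B, 1, f_A + f_B − f_A·f_B). -/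
/-- The certainty component of the CertainLogic `OR` operator. -/
noncomputable def ctOrC (tA cA fA tB cB fB : ℝ) : ℝ :=
  cA + cB - cA * cB -
    (cA * (1 - cB) * fB * (1 - tA) + (1 - cA) * cB * fA * (1 - tB)) /
      (fA + fB - fA * fB)

/-- The trust-value component of the CertainLogic `OR` operator. -/
noncomputable def ctOrT (tA cA fA tB cB fB : ℝ) : ℝ :=
  if ctOrC tA cA fA tB cB fB ≠ 0 then
    (1 / ctOrC tA cA fA tB cB fB) * (cA * tA + cB * tB - cA * cB * tA * tB)
  else 0.5

/-- The prior component of the CertainLogic `OR` operator. -/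
noncomputable def ctOrF (_tA _cA fA _tB _cB fB : ℝ) : ℝ := fA + fB - fA * fB

/-- The CertainLogic `OR` operator, as an opinion `(t, c, f)`. -/
noncomputable def ctOr (tA cA fA tB cB fB : ℝ) : ℝ × ℝ × ℝ :=
  (ctOrT tA cA fA tB cB fB, ctOrC tA cA fA tB cB fB, ctOrF tA cA fA tB cB fB)

/-- The CertainLogic `OR` operator generalizes standard probabilistic disjunction:
on fully certain opinions `(tA, 1, fA)` and `(tB, 1, fB)` it yields exactly
`(tA + tB − tA·tB, 1, fA + fB − fA·fB)`. -/
theorem ctOr_fully_certain (tA fA tB fB : ℝ)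
    (htA : tA ∈ Set.Icc (0 : ℝ) 1) (hfA : fA ∈ Set.Icc (0 : ℝ) 1)
    (htB : tB ∈ Set.Icc (0 : ℝ) 1) (hfB : fB ∈ Set.Icc (0 : ℝ) 1)
    (hf : fA + fB - fA * fB ≠ 0) :
    ctOr tA 1 fA tB 1 fB = (tA + tB - tA * tB, 1, fA + fB - fA * fB) := by
  have hc : ctOrC tA 1 fA tB 1 fB = 1 := by
    simp [ctOrC]
  simp [ctOr, ctOrT, ctOrF, hc]
end

section
/- The certainty produced by the CertainLogic AND operator is a valid certainty value: for all real numbers t_A, c_A, f_A, t_B, c_B, f_B ∈ [0,1] with f_A·f_B < 1, the value c_∧ = c_A + c_B − c_A·c_B − ((1−c_A)·c_B·(1−f_A)·t_B + c_A·(1−c_B)·(1−f_B)·t_A)/(1 − f_A·f_B) satisfies 0 ≤ c_∧ ≤ 1. -/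
/-- The certainty produced by the CertainLogic `AND` operator is a valid certainty
value in `[0,1]`. -/
theorem ctAnd_certainty_valid (tA cA fA tB cB fB : ℝ)
    (htA : tA ∈ Set.Icc (0 : ℝ) 1) (hcA : cA ∈ Set.Icc (0 : ℝ) 1)
    (hfA : fA ∈ Set.Icc (0 : ℝ) 1) (htB : tB ∈ Set.Icc (0 : ℝ) 1)
    (hcB : cB ∈ Set.Icc (0 : ℝ) 1) (hfB : fB ∈ Set.Icc (0 : ℝ) 1)
    (hf : fA * fB < 1) :
    0 ≤ cA + cB - cA * cB -
        ((1 - cA) * cB * (1 - fA) * tB + cA * (1 - cB) * (1 - fB) * tA) /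
          (1 - fA * fB) ∧
      cA + cB - cA * cB -
        ((1 - cA) * cB * (1 - fA) * tB + cA * (1 - cB) * (1 - fB) * tA) /
          (1 - fA * fB) ≤ 1 := by
  obtain ⟨htA0, htA1⟩ := htA
  obtain ⟨hcA0, hcA1⟩ := hcA
  obtain ⟨hfA0, hfA1⟩ := hfA
  obtain ⟨htB0, htB1⟩ := htB
  obtain ⟨hcB0, hcB1⟩ := hcB
  obtain ⟨hfB0, hfB1⟩ := hfB
  have hd : (0:ℝ) < 1 - fA * fB := by linarith
  constructor
  · rw [sub_nonneg, div_le_iff₀ hd]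
    nlinarith [mul_nonneg (mul_nonneg (mul_nonneg (sub_nonneg.2 hcA1) hcB0) (sub_nonneg.2 hfA1)) (sub_nonneg.2 htB1),
      mul_nonneg (mul_nonneg (mul_nonneg hcA0 (sub_nonneg.2 hcB1)) (sub_nonneg.2 hfB1)) (sub_nonneg.2 htA1),
      mul_nonneg (mul_nonneg hcA0 hcB0) hd.le,
      mul_nonneg (mul_nonneg (mul_nonneg hcB0 (sub_nonneg.2 hcA1)) hfA0) (sub_nonneg.2 hfB1),
      mul_nonneg (mul_nonneg (mul_nonneg hcA0 (sub_nonneg.2 hcB1)) hfB0) (sub_nonneg.2 hfA1)]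
  · have hnum : 0 ≤ (1 - cA) * cB * (1 - fA) * tB + cA * (1 - cB) * (1 - fB) * tA := by
      have h1 : 0 ≤ (1 - cA) * cB * (1 - fA) * tB :=
        mul_nonneg (mul_nonneg (mul_nonneg (by linarith) hcB0) (by linarith)) htB0
      have h2 : 0 ≤ cA * (1 - cB) * (1 - fB) * tA :=
        mul_nonneg (mul_nonneg (mul_nonneg hcA0 (by linarith)) (by linarith)) htA0
      linarith
    have : 0 ≤ ((1 - cA) * cB * (1 - fA) * tB + cA * (1 - cB) * (1 - fB) * tA) / (1 - fA * fB) :=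
      div_nonneg hnum hd.le
    nlinarith [mul_nonneg (sub_nonneg.2 hcA1) (sub_nonneg.2 hcB1)]
end

section
/- The certainty produced by the CertainLogic OR operator is a valid certainty value: for all real numbers t_A, c_A, f_A, t_B, c_B, f_B ∈ [0,1] with f_A + f_B − f_A·f_B > 0, the value c_∨ = c_A + c_B − c_A·c_B − (c_A·(1−c_B)·f_B·(1−t_A) + (1−c_A)·c_B·f_A·(1−t_B))/(f_A + f_B − f_A·f_B) satisfies 0 ≤ c_∨ ≤ 1. -/
/-- The certainty produced by the CertainLogic `OR` operator is a valid certainty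
value in `[0,1]`. -/
theorem ctOr_certainty_valid (tA cA fA tB cB fB : ℝ)
    (htA : tA ∈ Set.Icc (0 : ℝ) 1) (hcA : cA ∈ Set.Icc (0 : ℝ) 1)
    (hfA : fA ∈ Set.Icc (0 : ℝ) 1) (htB : tB ∈ Set.Icc (0 : ℝ) 1)
    (hcB : cB ∈ Set.Icc (0 : ℝ) 1) (hfB : fB ∈ Set.Icc (0 : ℝ) 1)
    (hf : 0 < fA + fB - fA * fB) :
    0 ≤ cA + cB - cA * cB -
        (cA * (1 - cB) * fB * (1 - tA) + (1 - cA) * cB * fA * (1 - tB)) /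
          (fA + fB - fA * fB) ∧
      cA + cB - cA * cB -
        (cA * (1 - cB) * fB * (1 - tA) + (1 - cA) * cB * fA * (1 - tB)) /
          (fA + fB - fA * fB) ≤ 1 := by
  obtain ⟨htA0, htA1⟩ := htA
  obtain ⟨hcA0, hcA1⟩ := hcA
  obtain ⟨hfA0, hfA1⟩ := hfA
  obtain ⟨htB0, htB1⟩ := htB
  obtain ⟨hcB0, hcB1⟩ := hcB
  obtain ⟨hfB0, hfB1⟩ := hfB
  constructor
  · rw [sub_nonneg, div_le_iff₀ hf]
    nlinarith [mul_nonneg hcA0 hcB0, mul_nonneg (sub_nonneg.2 hcA1) (sub_nonneg.2 hcB1),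
      mul_nonneg (mul_nonneg hcA0 (sub_nonneg.2 hcB1)) hfB0,
      mul_nonneg (mul_nonneg (sub_nonneg.2 hcA1) hcB0) hfA0,
      mul_nonneg (mul_nonneg (mul_nonneg hcA0 (sub_nonneg.2 hcB1)) hfB0) htA0,
      mul_nonneg (mul_nonneg (mul_nonneg (sub_nonneg.2 hcA1) hcB0) hfA0) htB0,
      mul_nonneg (mul_nonneg (mul_nonneg hcA0 (sub_nonneg.2 hcB1)) hfA0) (sub_nonneg.2 hfB1),
      mul_nonneg (mul_nonneg (mul_nonneg (sub_nonneg.2 hcA1) hcB0) hfB0) (sub_nonneg.2 hfA1),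
      mul_nonneg (mul_nonneg hcA0 hcB0) hfA0, mul_nonneg (mul_nonneg hcA0 hcB0) hfB0]
  · have hnum : 0 ≤ cA * (1 - cB) * fB * (1 - tA) + (1 - cA) * cB * fA * (1 - tB) := by
      have h1 : 0 ≤ cA * (1 - cB) * fB * (1 - tA) :=
        mul_nonneg (mul_nonneg (mul_nonneg hcA0 (by linarith)) hfB0) (by linarith)
      have h2 : 0 ≤ (1 - cA) * cB * fA * (1 - tB) :=
        mul_nonneg (mul_nonneg (mul_nonneg (by linarith) hcB0) hfA0) (by linarith)
      linarith
    have : 0 ≤ (cA * (1 - cB) * fB * (1 - tA) + (1 - cA) * cB * fA * (1 - tB)) /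
        (fA + fB - fA * fB) := div_nonneg hnum hf.le
    nlinarith [mul_nonneg (sub_nonneg.2 hcA1) (sub_nonneg.2 hcB1)]
end

section
/- The expectation of the CertainLogic AND of two opinions is the product of their expectations: for all real numbers t_A, c_A, f_A, t_B, c_B, f_B ∈ [0,1] with f_A·f_B ≠ 1, if the certainty component c_∧ of the AND of (t_A,c_A,f_A) and (t_B,c_B,f_B) is nonzero, then E(t_∧, c_∧, f_∧) = E(t_A,c_A,f_A) · E(t_B,c_B,f_B), where (t_∧, c_∧, f_∧) denotes the AND of the two opinions and E(t,c,f) = t·c + (1−c)·f. -/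
/-- The CertainTrust expectation `E(t,c,f) = t·c + (1-c)·f`. -/
def ctE (t c f : ℝ) : ℝ := t * c + (1 - c) * f

/-- The expectation of the CertainLogic `AND` of two opinions is the product of
their expectations (when the resulting certainty is nonzero). -/
theorem ctAnd_expectation (tA cA fA tB cB fB : ℝ)
    (htA : tA ∈ Set.Icc (0 : ℝ) 1) (hcA : cA ∈ Set.Icc (0 : ℝ) 1)
    (hfA : fA ∈ Set.Icc (0 : ℝ) 1) (htB : tB ∈ Set.Icc (0 : ℝ) 1)
    (hcB : cB ∈ Set.Icc (0 : ℝ) 1) (hfB : fB ∈ Set.Icc (0 : ℝ) 1)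
    (hf : fA * fB ≠ 1) (hc : ctAndC tA cA fA tB cB fB ≠ 0) :
    ctE (ctAndT tA cA fA tB cB fB) (ctAndC tA cA fA tB cB fB)
        (ctAndF tA cA fA tB cB fB) =
      ctE tA cA fA * ctE tB cB fB := by
  have h1 : (1 : ℝ) - fA * fB ≠ 0 := sub_ne_zero.mpr (Ne.symm hf)
  have hT : ctAndT tA cA fA tB cB fB * ctAndC tA cA fA tB cB fB =
      cA * cB * tA * tB +
        (cA * (1 - cB) * (1 - fA) * fB * tA + (1 - cA) * cB * fA * (1 - fB) * tB) /
          (1 - fA * fB) := by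
    rw [ctAndT, if_pos hc, one_div, inv_mul_eq_div, div_mul_eq_mul_div,
      mul_div_assoc, div_self hc, mul_one]
  rw [ctE, hT, ctAndF, ctAndC]
  rw [ctE, ctE]
  field_simp
  ring
end

section
/- The expectation of the CertainLogic OR of two opinions satisfies the probabilistic disjunction rule: for all real numbers t_A, c_A, f_A, t_B, c_B, f_B ∈ [0,1] with f_A + f_B − f_A·f_B ≠ 0, if the certainty component c_∨ of the OR of (t_A,c_A,f_A) and (t_B,c_B,f_B) is nonzero, then E(t_∨, c_∨, f_∨) = E(t_A,c_A,f_A) + E(t_B,c_B,f_B) − E(t_A,c_A,f_A)·E(t_B,c_B,f_B), where (t_∨, c_∨, f_∨) denotes the OR of the two opinions and E(t,c,f) = t·c + (1−c)·f. -/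
/-!
The OR opinion splits its expectation `t_∨ c_∨ + (1 - c_∨) f_∨` into a certain and an uncertain
part. By the choice of `t_∨`, the certain part `t_∨ c_∨` is the probabilistic OR of the certain
parts `t_A c_A`, `t_B c_B`. The correction term in `c_∨` is divided by `f_∨` precisely so that
`(1 - c_∨) f_∨` becomes a polynomial, collecting the cross terms in which at least one of the two
opinions contributes its prior. What remains is a polynomial identity.
-/

theorem ctOrT_mul_ctOrC {tA cA fA tB cB fB : ℝ} (hc : ctOrC tA cA fA tB cB fB ≠ 0) :
    ctOrT tA cA fA tB cB fB * ctOrC tA cA fA tB cB fB =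
      cA * tA + cB * tB - cA * cB * tA * tB := by
  rw [ctOrT, if_pos hc, one_div, mul_comm, ← mul_assoc, mul_inv_cancel₀ hc, one_mul]

theorem one_sub_ctOrC_mul_ctOrF {tA cA fA tB cB fB : ℝ} (hf : fA + fB - fA * fB ≠ 0) :
    (1 - ctOrC tA cA fA tB cB fB) * ctOrF tA cA fA tB cB fB =
      (1 - cA) * (1 - cB) * (fA + fB - fA * fB) + cA * (1 - cB) * fB * (1 - tA) +
        (1 - cA) * cB * fA * (1 - tB) := by
  rw [ctOrC, ctOrF]
  linear_combination
    div_mul_cancel₀ (cA * (1 - cB) * fB * (1 - tA) + (1 - cA) * cB * fA * (1 - tB)) hf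

theorem ctOr_expectation_general (tA cA fA tB cB fB : ℝ)
    (hf : fA + fB - fA * fB ≠ 0) (hc : ctOrC tA cA fA tB cB fB ≠ 0) :
    ctE (ctOrT tA cA fA tB cB fB) (ctOrC tA cA fA tB cB fB)
        (ctOrF tA cA fA tB cB fB) =
      ctE tA cA fA + ctE tB cB fB - ctE tA cA fA * ctE tB cB fB := by
  rw [ctE, ctOrT_mul_ctOrC hc, one_sub_ctOrC_mul_ctOrF hf, ctE, ctE]
  ring

/-- The expectation of the CertainLogic `OR` of two opinions satisfies the
probabilistic disjunction rule (when the resulting certainty is nonzero). -/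
theorem ctOr_expectation (tA cA fA tB cB fB : ℝ)
    (htA : tA ∈ Set.Icc (0 : ℝ) 1) (hcA : cA ∈ Set.Icc (0 : ℝ) 1)
    (hfA : fA ∈ Set.Icc (0 : ℝ) 1) (htB : tB ∈ Set.Icc (0 : ℝ) 1)
    (hcB : cB ∈ Set.Icc (0 : ℝ) 1) (hfB : fB ∈ Set.Icc (0 : ℝ) 1)
    (hf : fA + fB - fA * fB ≠ 0) (hc : ctOrC tA cA fA tB cB fB ≠ 0) :
    ctE (ctOrT tA cA fA tB cB fB) (ctOrC tA cA fA tB cB fB)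
        (ctOrF tA cA fA tB cB fB) =
      ctE tA cA fA + ctE tB cB fB - ctE tA cA fA * ctE tB cB fB :=
  ctOr_expectation_general tA cA fA tB cB fB hf hc
end
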